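/- Let Y be a finite set, μ a probability distribution on Y with μ(y) > 0 for all y, f_1,…,f_T: Y → ℝ with ||f_t||_∞ ≤ R for all t, and let π be a probability distribution on Y with c := D_KL(π || μ) > 0. Set η = R·√(2T/c), define π_1 = μ and for t ≥ 1 let π_{t+1}(y) ∝ π_t(y)·exp(f_t(y)/η). Then Σ_{t=1}^T Σ_{y∈Y} (π(y) − π_t(y))·f_t(y) ≤ 2√2 · R · √(c·T). -/

import Mathlib

/-!
With the potential `Φ t = D_KL(π ‖ π_t)`, one multiplicative-weights step satisfies
`η (Φ t - Φ (t + 1)) = ⟨π, f_t⟩ - η log Z_t`, and `exp x ≤ 1 + x + x²` on `|x| ≤ 1` gives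
`η log Z_t ≤ ⟨π_t, f_t⟩ + R² / η` as soon as `R ≤ η`. Telescoping and `Φ ≥ 0` (Gibbs) bound the
regret by `η c + T R² / η`, which for the tuned `η` equals `(3/2) √2 R √(cT)`. The condition
`R ≤ η` means `c ≤ 2T`; when `c > 2T` the crude per-round bound `2R` already suffices.
-/

open Finset

section ExponentialWeights

open Real (log exp)

variable {Y : Type*} [Fintype Y]

noncomputable def relEntropy (p q : Y → ℝ) : ℝ := ∑ y, p y * log (p y / q y)

noncomputable def gibbsUpdate (p g : Y → ℝ) (y : Y) : ℝ :=
  p y * exp (g y) / ∑ y', p y' * exp (g y')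

theorem relEntropy_nonneg {p q : Y → ℝ} (hp0 : ∀ y, 0 ≤ p y) (hq0 : ∀ y, 0 < q y)
    (hp1 : ∑ y, p y = 1) (hq1 : ∑ y, q y = 1) : 0 ≤ relEntropy p q := by
  have hterm (y : Y) : p y - q y ≤ p y * log (p y / q y) := by
    have hq := (hq0 y).ne'
    calc p y - q y = q y * (p y / q y - 1) := by field_simp
      _ ≤ q y * (p y / q y * log (p y / q y)) :=
        mul_le_mul_of_nonneg_left
          (Real.self_sub_one_le_mul_log (div_nonneg (hp0 y) (hq0 y).le)) (hq0 y).le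
      _ = p y * log (p y / q y) := by field_simp
  calc (0 : ℝ) = ∑ y, (p y - q y) := by rw [sum_sub_distrib, hp1, hq1, sub_self]
    _ ≤ relEntropy p q := sum_le_sum fun y _ => hterm y

theorem sum_sub_mul_le_two_mul {π p g : Y → ℝ} {R : ℝ} (hπ0 : ∀ y, 0 ≤ π y) (hπ1 : ∑ y, π y = 1)
    (hp0 : ∀ y, 0 ≤ p y) (hp1 : ∑ y, p y = 1) (hg : ∀ y, |g y| ≤ R) :
    ∑ y, (π y - p y) * g y ≤ 2 * R := by
  have hterm (y : Y) : (π y - p y) * g y ≤ (π y + p y) * R := by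
    obtain ⟨hlo, hhi⟩ := abs_le.mp (hg y)
    linarith [mul_le_mul_of_nonneg_left hhi (hπ0 y), mul_le_mul_of_nonneg_left hlo (hp0 y)]
  calc ∑ y, (π y - p y) * g y ≤ ∑ y, (π y + p y) * R := sum_le_sum fun y _ => hterm y
    _ = 2 * R := by rw [← sum_mul, sum_add_distrib, hπ1, hp1]; ring

variable [Nonempty Y] {p : Y → ℝ}

theorem sum_mul_exp_pos (hp : ∀ y, 0 < p y) (g : Y → ℝ) : 0 < ∑ y, p y * exp (g y) :=
  sum_pos (fun y _ => mul_pos (hp y) (Real.exp_pos _)) univ_nonempty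

theorem gibbsUpdate_pos (hp : ∀ y, 0 < p y) (g : Y → ℝ) (y : Y) : 0 < gibbsUpdate p g y :=
  div_pos (mul_pos (hp y) (Real.exp_pos _)) (sum_mul_exp_pos hp g)

theorem sum_gibbsUpdate (hp : ∀ y, 0 < p y) (g : Y → ℝ) : ∑ y, gibbsUpdate p g y = 1 := by
  rw [← div_self (sum_mul_exp_pos hp g).ne', sum_div]
  rfl

theorem relEntropy_sub_relEntropy_gibbsUpdate {π : Y → ℝ} (hp : ∀ y, 0 < p y)
    (hπ1 : ∑ y, π y = 1) (g : Y → ℝ) :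
    relEntropy π p - relEntropy π (gibbsUpdate p g)
      = ∑ y, π y * g y - log (∑ y, p y * exp (g y)) := by
  have hZ := (sum_mul_exp_pos hp g).ne'
  have hterm (y : Y) : π y * log (π y / p y) - π y * log (π y / gibbsUpdate p g y)
      = π y * g y - π y * log (∑ y, p y * exp (g y)) := by
    rcases eq_or_ne (π y) 0 with h | h
    · simp [h]
    · rw [Real.log_div h (hp y).ne', Real.log_div h (gibbsUpdate_pos hp g y).ne', gibbsUpdate,
        Real.log_div (mul_pos (hp y) (Real.exp_pos _)).ne' hZ,
        Real.log_mul (hp y).ne' (Real.exp_pos _).ne', Real.log_exp]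
      ring
  rw [relEntropy, relEntropy, ← sum_sub_distrib, sum_congr rfl fun y _ => hterm y,
    sum_sub_distrib, ← sum_mul, hπ1, one_mul]

theorem log_sum_mul_exp_le {g : Y → ℝ} (hp : ∀ y, 0 < p y) (hp1 : ∑ y, p y = 1)
    (hg : ∀ y, |g y| ≤ 1) :
    log (∑ y, p y * exp (g y)) ≤ ∑ y, p y * g y + ∑ y, p y * g y ^ 2 := by
  have hexp (y : Y) : exp (g y) ≤ 1 + g y + g y ^ 2 := by
    linarith [(abs_le.mp (Real.abs_exp_sub_one_sub_id_le (hg y))).2]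
  calc log (∑ y, p y * exp (g y)) ≤ ∑ y, p y * exp (g y) - 1 :=
        Real.log_le_sub_one_of_pos (sum_mul_exp_pos hp g)
    _ ≤ ∑ y, p y * (1 + g y + g y ^ 2) - 1 :=
        sub_le_sub_right (sum_le_sum fun y _ => mul_le_mul_of_nonneg_left (hexp y) (hp y).le) 1
    _ = ∑ y, p y * g y + ∑ y, p y * g y ^ 2 := by
        simp only [mul_add, mul_one, sum_add_distrib, hp1]
        ring

theorem sum_sub_mul_le_relEntropy_sub_gibbsUpdate {π g : Y → ℝ} {R η : ℝ} (hp : ∀ y, 0 < p y)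
    (hp1 : ∑ y, p y = 1) (hπ1 : ∑ y, π y = 1) (hg : ∀ y, |g y| ≤ R) (hη : 0 < η)
    (hRη : R ≤ η) :
    ∑ y, (π y - p y) * g y
      ≤ η * (relEntropy π p - relEntropy π (gibbsUpdate p fun y => g y / η)) + R ^ 2 / η := by
  have hg' (y : Y) : |g y / η| ≤ R / η := by
    rw [abs_div, abs_of_pos hη]
    exact div_le_div_of_nonneg_right (hg y) hη.le
  have hlog := log_sum_mul_exp_le hp hp1 fun y => (hg' y).trans ((div_le_one hη).mpr hRη)
  have hsq : ∑ y, p y * (g y / η) ^ 2 ≤ R ^ 2 / η ^ 2 :=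
    calc ∑ y, p y * (g y / η) ^ 2 ≤ ∑ y, p y * (R / η) ^ 2 :=
          sum_le_sum fun y _ => mul_le_mul_of_nonneg_left
            (sq_le_sq' (neg_le_of_abs_le (hg' y)) (le_of_abs_le (hg' y))) (hp y).le
      _ = R ^ 2 / η ^ 2 := by rw [← sum_mul, hp1, one_mul, div_pow]
  have hlin (q : Y → ℝ) : ∑ y, q y * (g y / η) = (∑ y, q y * g y) / η := by
    rw [sum_div]
    simp only [mul_div_assoc]
  rw [relEntropy_sub_relEntropy_gibbsUpdate hp hπ1, hlin]
  rw [hlin] at hlog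
  have key : η * log (∑ y, p y * exp (g y / η)) ≤ ∑ y, p y * g y + R ^ 2 / η := by
    calc η * log (∑ y, p y * exp (g y / η))
        ≤ η * ((∑ y, p y * g y) / η + R ^ 2 / η ^ 2) :=
          mul_le_mul_of_nonneg_left (by linarith) hη.le
      _ = ∑ y, p y * g y + R ^ 2 / η := by field_simp
  have hsplit : ∑ y, (π y - p y) * g y = ∑ y, π y * g y - ∑ y, p y * g y := by
    simp only [sub_mul, sum_sub_distrib]
  rw [hsplit, mul_sub, mul_div_cancel₀ _ hη.ne']
  linarith

theorem gibbsUpdate_iterate_pos_sum {πs g : ℕ → Y → ℝ} (h1pos : ∀ y, 0 < πs 1 y)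
    (h1sum : ∑ y, πs 1 y = 1) (hrec : ∀ t, 1 ≤ t → πs (t + 1) = gibbsUpdate (πs t) (g t))
    {t : ℕ} (ht : 1 ≤ t) : (∀ y, 0 < πs t y) ∧ ∑ y, πs t y = 1 := by
  induction t, ht using Nat.le_induction with
  | base => exact ⟨h1pos, h1sum⟩
  | succ t ht ih =>
    rw [hrec t ht]
    exact ⟨gibbsUpdate_pos ih.1 (g t), sum_gibbsUpdate ih.1 (g t)⟩

theorem regret_le_relEntropy_of_le_stepsize {π : Y → ℝ} {πs f : ℕ → Y → ℝ} {R η : ℝ} (T : ℕ)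
    (hπ0 : ∀ y, 0 ≤ π y) (hπ1 : ∑ y, π y = 1) (h1pos : ∀ y, 0 < πs 1 y)
    (h1sum : ∑ y, πs 1 y = 1) (hf : ∀ t y, |f t y| ≤ R) (hη : 0 < η) (hRη : R ≤ η)
    (hrec : ∀ t, 1 ≤ t → πs (t + 1) = gibbsUpdate (πs t) fun y => f t y / η) :
    ∑ t ∈ Icc 1 T, ∑ y, (π y - πs t y) * f t y ≤ η * relEntropy π (πs 1) + T * (R ^ 2 / η) := by
  have hπs {t : ℕ} (ht : 1 ≤ t) := gibbsUpdate_iterate_pos_sum h1pos h1sum hrec ht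
  set Φ := fun t => relEntropy π (πs t)
  have htelescope : ∑ t ∈ Icc 1 T, (Φ t - Φ (t + 1)) = Φ 1 - Φ (T + 1) := by
    rw [← Ico_add_one_right_eq_Icc, ← neg_sub, ← sum_Ico_sub Φ (by omega : 1 ≤ T + 1),
      ← sum_neg_distrib]
    simp only [neg_sub]
  have hΦ : 0 ≤ Φ (T + 1) := by
    obtain ⟨hpos, hsum⟩ := hπs (Nat.le_add_left 1 T)
    exact relEntropy_nonneg hπ0 hpos hπ1 hsum
  calc ∑ t ∈ Icc 1 T, ∑ y, (π y - πs t y) * f t y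
      ≤ ∑ t ∈ Icc 1 T, (η * (Φ t - Φ (t + 1)) + R ^ 2 / η) := by
        refine sum_le_sum fun t ht => ?_
        obtain ⟨hpos, hsum⟩ := hπs (mem_Icc.mp ht).1
        simp only [Φ, hrec t (mem_Icc.mp ht).1]
        exact sum_sub_mul_le_relEntropy_sub_gibbsUpdate hpos hsum hπ1 (hf t) hη hRη
    _ = η * (Φ 1 - Φ (T + 1)) + T * (R ^ 2 / η) := by
        rw [sum_add_distrib, ← mul_sum, htelescope, sum_const, Nat.card_Icc, nsmul_eq_mul]
        simp
    _ ≤ η * relEntropy π (πs 1) + T * (R ^ 2 / η) := by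
        linarith [mul_le_mul_of_nonneg_left hΦ hη.le]

end ExponentialWeights

theorem tuned_stepsize_regret_bound_le {R T c : ℝ} (hR : 0 < R) (hc : 0 < c)
    (hcT : c ≤ 2 * T) :
    R * √(2 * T / c) * c + T * (R ^ 2 / (R * √(2 * T / c)))
      ≤ 2 * √2 * R * √(c * T) := by
  have hT : 0 < T := by linarith
  have hsqrt2 := Real.sq_sqrt (show (0 : ℝ) ≤ 2 by norm_num)
  have hsqrtcT := Real.sq_sqrt (show (0 : ℝ) ≤ c * T by positivity)
  have hu : √(2 * T / c) = √2 * √(c * T) / c := by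
    have hsq : 2 * T / c = (√2 * √(c * T) / c) ^ 2 := by
      rw [div_pow, mul_pow, hsqrt2, hsqrtcT]
      field_simp
    rw [hsq, Real.sqrt_sq (by positivity)]
  calc R * √(2 * T / c) * c + T * (R ^ 2 / (R * √(2 * T / c)))
      = 3 / 2 * (√2 * R * √(c * T)) := by
        rw [hu]
        field_simp
        rw [hsqrt2, hsqrtcT]
        ring
    _ ≤ 2 * √2 * R * √(c * T) := by
        have : 0 ≤ √2 * R * √(c * T) := by positivity
        linarith

theorem mul_two_mul_le_tuned_regret_bound {R T c : ℝ} (hR : 0 ≤ R) (hT : 0 ≤ T)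
    (hTc : 2 * T ≤ c) :
    T * (2 * R) ≤ 2 * √2 * R * √(c * T) := by
  have hT2 : T ≤ √2 * √(c * T) := by
    rw [← Real.sqrt_mul (by norm_num)]
    exact Real.le_sqrt_of_sq_le (by nlinarith)
  nlinarith

/-- (Tuned regret bound) With `π_1 = μ` fully supported,
`‖f_t‖_∞ ≤ R` for all `t`, a comparator distribution `π` with
`c := D_KL(π‖μ) > 0`, stepsize `η = R·√(2T/c)` and
`π_{t+1}(y) ∝ π_t(y)·exp(f_t(y)/η)` for all `t ≥ 1`, we get
`Σ_{t=1}^T ⟨π − π_t, f_t⟩ ≤ 2√2·R·√(cT)`. -/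
theorem mirror_descent_regret_tuned {Y : Type*} [Fintype Y]
    (μ : Y → ℝ) (hμ0 : ∀ y, 0 < μ y) (hμ1 : ∑ y, μ y = 1)
    (T : ℕ)
    (f : ℕ → Y → ℝ) (R : ℝ) (hR : ∀ t y, |f t y| ≤ R)
    (π : Y → ℝ) (hπ0 : ∀ y, 0 ≤ π y) (hπ1 : ∑ y, π y = 1)
    (c : ℝ) (hc : c = ∑ y, π y * Real.log (π y / μ y)) (hcpos : 0 < c)
    (η : ℝ) (hη : η = R * Real.sqrt (2 * T / c))
    (πs : ℕ → Y → ℝ)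
    (hinit : πs 1 = μ)
    (hrec : ∀ t, 1 ≤ t → ∀ y,
      πs (t + 1) y = πs t y * Real.exp (f t y / η)
        / ∑ y', πs t y' * Real.exp (f t y' / η)) :
    ∑ t ∈ Finset.Icc 1 T, ∑ y, (π y - πs t y) * f t y
      ≤ 2 * Real.sqrt 2 * R * Real.sqrt (c * T) := by
  have : Nonempty Y :=
    have ⟨y, _, _⟩ := exists_ne_zero_of_sum_ne_zero (hμ1.trans_ne one_ne_zero)
    ⟨y⟩
  have hrec' (t : ℕ) (ht : 1 ≤ t) : πs (t + 1) = gibbsUpdate (πs t) fun y => f t y / η :=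
    funext (hrec t ht)
  have hπs {t : ℕ} (ht : 1 ≤ t) :=
    gibbsUpdate_iterate_pos_sum (hinit ▸ hμ0) (hinit ▸ hμ1) hrec' ht
  have htrivial : ∑ t ∈ Icc 1 T, ∑ y, (π y - πs t y) * f t y ≤ T * (2 * R) :=
    calc _ ≤ ∑ t ∈ Icc 1 T, 2 * R := sum_le_sum fun t ht =>
          have ⟨hpos, hsum⟩ := hπs (mem_Icc.mp ht).1
          sum_sub_mul_le_two_mul hπ0 hπ1 (fun y => (hpos y).le) hsum (hR t)
      _ = T * (2 * R) := by simp
  have hR0 : 0 ≤ R := (abs_nonneg _).trans (hR 0 (Classical.arbitrary Y))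
  rcases hR0.eq_or_lt with rfl | hRpos
  · simpa using htrivial
  rcases le_or_gt c (2 * T) with hcT | hcT
  · have hRη : R ≤ η := hη ▸ le_mul_of_one_le_right hRpos.le
      (Real.one_le_sqrt.mpr ((one_le_div hcpos).mpr hcT))
    have hrel : relEntropy π (πs 1) = c := by rw [hinit, hc]; rfl
    calc _ ≤ η * relEntropy π (πs 1) + T * (R ^ 2 / η) :=
          regret_le_relEntropy_of_le_stepsize T hπ0 hπ1 (hinit ▸ hμ0) (hinit ▸ hμ1) hR
            (hRpos.trans_le hRη) hRη hrec'
      _ ≤ 2 * Real.sqrt 2 * R * Real.sqrt (c * T) := by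
          rw [hrel, hη]
          exact tuned_stepsize_regret_bound_le hRpos hcpos hcT
  · exact htrivial.trans (mul_two_mul_le_tuned_regret_bound hRpos.le (Nat.cast_nonneg T) hcT.le)
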